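/- Outermost-tier bound lemma: let ρ be a typing derivation of a safe program with respect to Γ and a safe Δ. For any subderivation ρ₁ ⊢ while(e₁){c₁} : (t¹,t¹_in,t¹_out) in D(ρ) whose last rule is (W) or (W₀), and any command typing subderivation ρ₂ ⊢ c₂ : (t²,t²_in,t²_out) in D̊(ρ₁), it holds that t¹ ⪯ t²_out. -/

import Mathlib

namespace BFFpaper

/-! ### Words -/

/-- Words over the alphabet `{0,1}` (`false` = 0, `true` = 1). -/
abbrev W : Type := List Bool

/-- `padTrunc v w` truncates `v` to its first `min |v| |w|` symbols and pads the
result with a word of the form `10^k` so that the result has length `|w| + 1`. -/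
def padTrunc (v w : W) : W :=
  v.take w.length ++ true :: List.replicate (w.length - (v.take w.length).length) false

/-- Maximum of a list of naturals (0 for the empty list). -/
def maxList (l : List ℕ) : ℕ := l.foldr max 0

/-- `lrAux m l` counts the positions of `l` whose value strictly exceeds the
maximum of `m` and all previous values. -/
def lrAux : ℕ → List ℕ → ℕ
  | _, [] => 0
  | m, a :: l => if m < a then lrAux (max m a) l + 1 else lrAux m l

/-- Number of "lookahead revisions" in a sequence of oracle inputs: the number of
indices whose entry is strictly longer than all previous entries. -/
def lrCount (l : List W) : ℕ := lrAux 0 (l.map List.length)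

/-! ### Oracle Turing machines -/

/-- Tape symbols: `none` is the blank symbol. -/
abbrev Sym := Option Bool

/-- A (half-abstract) two-way infinite tape with a head: left part (reversed) and
right part, the head scanning the first symbol of the right part. -/
abbrev HTape := List Sym × List Sym

def tRead (t : HTape) : Sym := t.2.headD none

def tWrite (t : HTape) (s : Sym) : HTape := (t.1, s :: t.2.tail)

inductive Move | L | R | N
deriving DecidableEq

def tMove (t : HTape) : Move → HTape
  | .L => (t.1.tail, t.1.headD none :: t.2)
  | .R => (t.2.headD none :: t.1, t.2.tail)
  | .N => t

def tAct (t : HTape) (a : Sym × Move) : HTape := tMove (tWrite t a.1) a.2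

/-- The word written on a tape starting at the head (up to the first blank). -/
def tWord (t : HTape) : W := (t.2.takeWhile fun s => s.isSome).filterMap id

def ofWord (w : W) : HTape := ([], w.map some)

/-- A deterministic oracle Turing machine with `k` (unary, word-valued) oracles,
an input tape, a query tape, an answer tape and a work tape.  The transition
function reads the state and the four scanned symbols and either halts (`none`)
or produces a new state, a write/move action for each tape and an optional
oracle index: if an oracle index `i` is produced, the machine poses the content
of the query tape as a query and the oracle answer `φ i q` appears on the answer
tape in this single step. -/
structure OTM (k : ℕ) where
  states : ℕ
  q₀ : Fin (states + 1)
  δ : Fin (states + 1) → Sym × Sym × Sym × Sym →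
      Option (Fin (states + 1) × (Sym × Move) × (Sym × Move) × (Sym × Move) × (Sym × Move) ×
        Option (Fin k))

/-- Configurations of an oracle Turing machine. -/
structure Cfg (k : ℕ) (M : OTM k) where
  q : Fin (M.states + 1)
  inp : HTape
  qry : HTape
  ans : HTape
  wrk : HTape

namespace OTM

variable {k : ℕ}

def reads (M : OTM k) (c : Cfg k M) : Sym × Sym × Sym × Sym :=
  (tRead c.inp, tRead c.qry, tRead c.ans, tRead c.wrk)

/-- One step of the machine (`none` when the machine halts). -/
def step (M : OTM k) (φ : Fin k → W → W) (c : Cfg k M) : Option (Cfg k M) :=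
  match M.δ c.q (M.reads c) with
  | none => none
  | some (q', ai, aq, aa, aw, oq) =>
    let qry' := tAct c.qry aq
    some { q := q', inp := tAct c.inp ai, qry := qry',
           ans := match oq with
                  | none => tAct c.ans aa
                  | some i => ofWord (φ i (tWord qry'))
           wrk := tAct c.wrk aw }

/-- Running the machine for `n` steps (`none` if the machine halts earlier). -/
def run (M : OTM k) (φ : Fin k → W → W) : ℕ → Cfg k M → Option (Cfg k M)
  | 0, c => some c
  | n + 1, c => (M.step φ c).bind (M.run φ n)

/-- The (oracle index, query word) posed by the present step, if it is a query step. -/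
def stepQuery (M : OTM k) (c : Cfg k M) : List (Fin k × W) :=
  match M.δ c.q (M.reads c) with
  | some (_, _, aq, _, _, some i) => [(i, tWord (tAct c.qry aq))]
  | _ => []

/-- The list of queries posed during the first `n` steps of the run from `c`,
in chronological order. -/
def queries (M : OTM k) (φ : Fin k → W → W) : ℕ → Cfg k M → List (Fin k × W)
  | 0, _ => []
  | n + 1, c =>
    M.stepQuery c ++ (match M.step φ c with
      | none => []
      | some c' => M.queries φ n c')

/-- Initial configuration on a list of input words (separated by blanks on the
input tape). -/
def init (M : OTM k) (a : List W) : Cfg k M :=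
  { q := M.q₀, inp := ([], List.intercalate [none] (a.map fun w => w.map some)),
    qry := ([], []), ans := ([], []), wrk := ([], []) }

/-- The machine, with oracles `φ`, halts after exactly `n` steps from `c₀` in
configuration `c'`. -/
def HaltsAt (M : OTM k) (φ : Fin k → W → W) (c₀ : Cfg k M) (n : ℕ) (c' : Cfg k M) : Prop :=
  M.run φ n c₀ = some c' ∧ M.step φ c' = none

/-- The machine computes the type-2 functional `F` (output read off the work tape). -/
def Computes {m : ℕ} (M : OTM k) (F : (Fin k → W → W) → (Fin m → W) → W) : Prop :=
  ∀ (φ : Fin k → W → W) (v : Fin m → W),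
    ∃ n c', M.HaltsAt φ (M.init (List.ofFn v)) n c' ∧ tWord c'.wrk = F φ v

/-- Polynomial step count: the running time is bounded by a (type-1) polynomial in
the maximum of the input size and the sizes of all oracle answers during the run. -/
def PolyStepCount (M : OTM k) : Prop :=
  ∃ P : Polynomial ℕ, ∀ (φ : Fin k → W → W) (a : List W) (n : ℕ) (c' : Cfg k M),
    M.HaltsAt φ (M.init a) n c' →
      n ≤ P.eval (max (maxList (a.map List.length))
        (maxList ((M.queries φ n (M.init a)).map fun iw => (φ iw.1 iw.2).length)))

/-- Finite lookahead revision: on any oracle and any input, it happens at most `r`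
times that a query is posed whose size exceeds the sizes of all previous queries. -/
def FiniteLookahead (M : OTM k) : Prop :=
  ∃ r : ℕ, ∀ (φ : Fin k → W → W) (a : List W) (n : ℕ),
    lrAux 0 ((M.queries φ n (M.init a)).map fun iw => iw.2.length) ≤ r

end OTM

/-! ### Second-order polynomials and the basic feasible functionals -/

/-- Second-order polynomials in `k` length-functions and `m` first-order variables. -/
inductive SOP (k m : ℕ)
  | var : Fin m → SOP k m
  | const : ℕ → SOP k m
  | add : SOP k m → SOP k m → SOP k m
  | mul : SOP k m → SOP k m → SOP k m
  | app : Fin k → SOP k m → SOP k m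

def SOP.eval {k m : ℕ} (L : Fin k → ℕ → ℕ) (v : Fin m → ℕ) : SOP k m → ℕ
  | .var i => v i
  | .const c => c
  | .add p q => p.eval L v + q.eval L v
  | .mul p q => p.eval L v * q.eval L v
  | .app i p => L i (p.eval L v)

/-- The length function `|φ|` of an oracle: `|φ|(n)` is the maximal size of `φ w`
over words `w` of length at most `n`. -/
noncomputable def lenFun (φ : W → W) (n : ℕ) : ℕ :=
  sSup ((fun w => (φ w).length) '' { w : W | w.length ≤ n })

/-- Kapron–Cook style basic feasible functionals with `k` oracles and `m` word
arguments: computable by an oracle Turing machine whose running time is bounded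
by a second-order polynomial in the lengths `|φᵢ|` of the oracles and the sizes of
the inputs. -/
def BFFkm (k m : ℕ) : Set ((Fin k → W → W) → (Fin m → W) → W) :=
  { F | ∃ M : OTM k, M.Computes F ∧ ∃ P : SOP k m,
      ∀ (φ : Fin k → W → W) (v : Fin m → W) (n : ℕ) (c' : Cfg k M),
        M.HaltsAt φ (M.init (List.ofFn v)) n c' →
          n ≤ P.eval (fun i => lenFun (φ i)) (fun j => (v j).length) }

/-- The class `FP` of `m`-ary polynomial time computable (type-1) functions. -/
def FPm (m : ℕ) : Set ((Fin m → W) → W) :=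
  { F | ∃ M : OTM 0, M.Computes (fun _ v => F v) ∧ ∃ P : SOP 0 m,
      ∀ (φ : Fin 0 → W → W) (v : Fin m → W) (n : ℕ) (c' : Cfg 0 M),
        M.HaltsAt φ (M.init (List.ofFn v)) n c' →
          n ≤ P.eval (fun i => i.elim0) (fun j => (v j).length) }

/-- Moderately polynomial time functionals with `m` word arguments: computable by
an oracle machine with polynomial step count and finite lookahead revision. -/
def MPTm (m : ℕ) : Set ((W → W) → (Fin m → W) → W) :=
  { F | ∃ M : OTM 1, M.Computes (fun φs v => F (φs 0) v) ∧
      M.PolyStepCount ∧ M.FiniteLookahead }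

/-- The class MPT of type-2 functionals `(W → W) → W → W`. -/
def MPT : Set ((W → W) → W → W) := { F | (fun φ v => F φ (v 0)) ∈ MPTm 1 }

/-! ### Simple types, lambda terms and lambda closures -/

/-- Simple types over the base type of words. -/
inductive Ty
  | base : Ty
  | arrow : Ty → Ty → Ty

/-- Set-theoretic interpretation of simple types. -/
def Ty.interp : Ty → Type
  | .base => W
  | .arrow a b => a.interp → b.interp

/-- Type level. -/
def Ty.lev : Ty → ℕ
  | .base => 0
  | .arrow a b => max (a.lev + 1) b.lev

/-- A class of functionals: a set of functionals at each simple type. -/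
abbrev FClass := ∀ τ : Ty, Set τ.interp

/-- Simply typed lambda terms with constants from the class `X`. -/
inductive Tm (X : FClass) : List Ty → Ty → Type
  | var : ∀ {Γ : List Ty} (i : Fin Γ.length), Tm X Γ (Γ.get i)
  | con : ∀ {Γ : List Ty} {τ : Ty} (f : τ.interp), f ∈ X τ → Tm X Γ τ
  | lam : ∀ {Γ : List Ty} {σ τ : Ty}, Tm X (σ :: Γ) τ → Tm X Γ (.arrow σ τ)
  | app : ∀ {Γ : List Ty} {σ τ : Ty}, Tm X Γ (.arrow σ τ) → Tm X Γ σ → Tm X Γ τ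

/-- Denotational semantics of lambda terms. -/
def Tm.denote {X : FClass} : ∀ {Γ : List Ty} {τ : Ty},
    Tm X Γ τ → ((i : Fin Γ.length) → (Γ.get i).interp) → τ.interp
  | _, _, .var i, env => env i
  | _, _, .con f _, _ => f
  | Γ, _, .lam (σ := σ) t, env => fun a =>
      t.denote (fun i => Fin.cases (motive := fun i => (((σ :: Γ).get i)).interp) a env i)
  | _, _, .app t s, env => (t.denote env) (s.denote env)

/-- The simply typed lambda closure `λ(X)` of a class of functionals. -/
def lambdaCl (X : FClass) : FClass := fun τ =>
  { f | ∃ t : Tm X [] τ, t.denote (fun i => i.elim0) = f }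

/-- Restriction of a class to functionals of type level 2. -/
def levelTwo (X : FClass) : FClass := fun τ => { f | τ.lev = 2 ∧ f ∈ X τ }

/-- `λ(X)₂`: the type-2 restriction of the simply typed lambda closure of `X`. -/
def lambdaTwo (X : FClass) : FClass := levelTwo (lambdaCl X)

/-- The simple type `W → ⋯ → W → W` with `m` word arguments. -/
def tyW1 : ℕ → Ty
  | 0 => .base
  | m + 1 => .arrow .base (tyW1 m)

/-- The simple type `(W → W) → ⋯ → (W → W) → W → ⋯ → W → W` with `k` oracle
arguments and `m` word arguments. -/
def tyKM : ℕ → ℕ → Ty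
  | 0, m => tyW1 m
  | k + 1, m => .arrow (.arrow .base .base) (tyKM k m)

def curryW : ∀ m : ℕ, ((Fin m → W) → W) → (tyW1 m).interp
  | 0, F => F Fin.elim0
  | m + 1, F => fun a => curryW m (fun v => F (Fin.cons a v))

def curryKM : ∀ k m : ℕ, ((Fin k → W → W) → (Fin m → W) → W) → (tyKM k m).interp
  | 0, m, F => curryW m (F Fin.elim0)
  | k + 1, m, F => fun φ => curryKM k m (fun φs => F (Fin.cons φ φs))

/-- The class of functionals (at all simple types) obtained from a family of
multi-ary functionals by currying. -/
def classKM (S : ∀ k m : ℕ, Set ((Fin k → W → W) → (Fin m → W) → W)) : FClass :=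
  fun _τ f => ∃ k m F, F ∈ S k m ∧ HEq f (curryKM k m F)

/-- The class `BFF₂` of type-2 basic feasible functionals, at all level-2 types. -/
def BFF2 : FClass := lambdaTwo (classKM BFFkm)

/-! ### The imperative language with oracles -/

/-- A signature: a set of operators with arities and total word semantics. -/
structure Sig where
  Op : Type
  ar : Op → ℕ
  sem : ∀ o : Op, (Fin (ar o) → W) → W

/-- Expressions. -/
inductive Expr (S : Sig)
  | var : ℕ → Expr S
  | op : (o : S.Op) → (Fin (S.ar o) → Expr S) → Expr S
  | orac : Expr S → Expr S → Expr S

/-- Commands. -/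
inductive Cmd (S : Sig)
  | skip : Cmd S
  | assign : ℕ → Expr S → Cmd S
  | seq : Cmd S → Cmd S → Cmd S
  | ite : Expr S → Cmd S → Cmd S → Cmd S
  | wh : Expr S → Cmd S → Cmd S

/-- Programs: a command together with a return variable. -/
structure Prog (S : Sig) where
  cmd : Cmd S
  ret : ℕ

variable {S : Sig}

/-- Evaluation of expressions (stores are total maps from variables to words). -/
def evalE (S : Sig) (φ : W → W) (μ : ℕ → W) : Expr S → W
  | .var x => μ x
  | .op o a => S.sem o (fun i => evalE S φ μ (a i))
  | .orac e₁ e₂ => φ (padTrunc (evalE S φ μ e₁) (evalE S φ μ e₂))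

/-- Size (number of nodes) of the evaluation derivation of an expression. -/
def sizeE : Expr S → ℕ
  | .var _ => 1
  | .op _ a => 1 + ∑ i, sizeE (a i)
  | .orac e₁ e₂ => 1 + sizeE e₁ + sizeE e₂

/-- The sequence of oracle input values occurring in the evaluation of an
expression, in left-to-right order. -/
def queriesE (S : Sig) (φ : W → W) (μ : ℕ → W) : Expr S → List W
  | .var _ => []
  | .op _ a => (List.ofFn fun i => queriesE S φ μ (a i)).flatten
  | .orac e₁ e₂ => queriesE S φ μ e₁ ++ queriesE S φ μ e₂ ++
      [padTrunc (evalE S φ μ e₁) (evalE S φ μ e₂)]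

/-- Big-step operational semantics of commands, instrumented with the size of
the derivation and the chronological list of oracle input values. -/
inductive EvalC (S : Sig) (φ : W → W) : Cmd S → (ℕ → W) → (ℕ → W) → ℕ → List W → Prop
  | skip {μ} : EvalC S φ .skip μ μ 1 []
  | assign {μ x e} :
      EvalC S φ (.assign x e) μ (Function.update μ x (evalE S φ μ e)) (sizeE e + 1)
        (queriesE S φ μ e)
  | seq {c₁ c₂ μ μ₁ μ₂ n₁ n₂ q₁ q₂} :
      EvalC S φ c₁ μ μ₁ n₁ q₁ → EvalC S φ c₂ μ₁ μ₂ n₂ q₂ →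
      EvalC S φ (.seq c₁ c₂) μ μ₂ (n₁ + n₂ + 1) (q₁ ++ q₂)
  | ifT {e c₁ c₀ μ μ' n q} :
      evalE S φ μ e = [true] → EvalC S φ c₁ μ μ' n q →
      EvalC S φ (.ite e c₁ c₀) μ μ' (sizeE e + n + 1) (queriesE S φ μ e ++ q)
  | ifF {e c₁ c₀ μ μ' n q} :
      evalE S φ μ e = [false] → EvalC S φ c₀ μ μ' n q →
      EvalC S φ (.ite e c₁ c₀) μ μ' (sizeE e + n + 1) (queriesE S φ μ e ++ q)
  | whF {e c μ} :
      evalE S φ μ e = [false] →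
      EvalC S φ (.wh e c) μ μ (sizeE e + 1) (queriesE S φ μ e)
  | whT {e c μ μ₁ μ₂ n₁ n₂ q₁ q₂} :
      evalE S φ μ e = [true] → EvalC S φ c μ μ₁ n₁ q₁ →
      EvalC S φ (.wh e c) μ₁ μ₂ n₂ q₂ →
      EvalC S φ (.wh e c) μ μ₂ (sizeE e + n₁ + n₂ + 1) (queriesE S φ μ e ++ q₁ ++ q₂)

/-! ### Syntactic notions -/

/-- Variables of an expression. -/
def varsE : Expr S → Finset ℕ
  | .var x => {x}
  | .op _ a => Finset.univ.biUnion fun i => varsE (a i)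
  | .orac e₁ e₂ => varsE e₁ ∪ varsE e₂

/-- Variables of a command. -/
def varsC : Cmd S → Finset ℕ
  | .skip => ∅
  | .assign x e => insert x (varsE e)
  | .seq c₁ c₂ => varsC c₁ ∪ varsC c₂
  | .ite e c₁ c₂ => varsE e ∪ varsC c₁ ∪ varsC c₂
  | .wh e c => varsE e ∪ varsC c

/-- Variables assigned to in a command. -/
def AssignedIn (x : ℕ) : Cmd S → Prop
  | .skip => False
  | .assign y _ => x = y
  | .seq c₁ c₂ => AssignedIn x c₁ ∨ AssignedIn x c₂
  | .ite _ c₁ c₂ => AssignedIn x c₁ ∨ AssignedIn x c₂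
  | .wh _ c => AssignedIn x c

/-- Subexpression occurrence. -/
inductive SubExpr : Expr S → Expr S → Prop
  | refl (e : Expr S) : SubExpr e e
  | op {e : Expr S} {o : S.Op} {a : Fin (S.ar o) → Expr S} (i : Fin (S.ar o)) :
      SubExpr e (a i) → SubExpr e (.op o a)
  | oracL {e e₁ e₂ : Expr S} : SubExpr e e₁ → SubExpr e (.orac e₁ e₂)
  | oracR {e e₁ e₂ : Expr S} : SubExpr e e₂ → SubExpr e (.orac e₁ e₂)

/-- Occurrence of an expression in a command. -/
inductive ExprInCmd : Expr S → Cmd S → Prop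
  | assign {e e' : Expr S} {x : ℕ} : SubExpr e e' → ExprInCmd e (.assign x e')
  | seqL {e c₁ c₂} : ExprInCmd e c₁ → ExprInCmd e (.seq c₁ c₂)
  | seqR {e c₁ c₂} : ExprInCmd e c₂ → ExprInCmd e (.seq c₁ c₂)
  | iteG {e e' c₁ c₂} : SubExpr e e' → ExprInCmd e (.ite e' c₁ c₂)
  | iteL {e e' c₁ c₂} : ExprInCmd e c₁ → ExprInCmd e (.ite e' c₁ c₂)
  | iteR {e e' c₁ c₂} : ExprInCmd e c₂ → ExprInCmd e (.ite e' c₁ c₂)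
  | whG {e e' c} : SubExpr e e' → ExprInCmd e (.wh e' c)
  | whB {e e' c} : ExprInCmd e c → ExprInCmd e (.wh e' c)

/-- Occurrence of a command in a command. -/
inductive CmdInCmd : Cmd S → Cmd S → Prop
  | refl (c : Cmd S) : CmdInCmd c c
  | seqL {c c₁ c₂} : CmdInCmd c c₁ → CmdInCmd c (.seq c₁ c₂)
  | seqR {c c₁ c₂} : CmdInCmd c c₂ → CmdInCmd c (.seq c₁ c₂)
  | iteL {c e c₁ c₂} : CmdInCmd c c₁ → CmdInCmd c (.ite e c₁ c₂)
  | iteR {c e c₁ c₂} : CmdInCmd c c₂ → CmdInCmd c (.ite e c₁ c₂)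
  | whB {c e c'} : CmdInCmd c c' → CmdInCmd c (.wh e c')

/-- All operators occurring in an expression are neutral (w.r.t. predicate `N`). -/
def OpsSat (N : S.Op → Prop) : Expr S → Prop
  | .var _ => True
  | .op o a => N o ∧ ∀ i, OpsSat N (a i)
  | .orac e₁ e₂ => OpsSat N e₁ ∧ OpsSat N e₂

/-- No oracle call occurs in the expression. -/
def OracleFreeE : Expr S → Prop
  | .var _ => True
  | .op _ a => ∀ i, OracleFreeE (a i)
  | .orac _ _ => False

/-- No oracle call occurs in the command. -/
def OracleFreeC : Cmd S → Prop
  | .skip => True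
  | .assign _ e => OracleFreeE e
  | .seq c₁ c₂ => OracleFreeC c₁ ∧ OracleFreeC c₂
  | .ite e c₁ c₂ => OracleFreeE e ∧ OracleFreeC c₁ ∧ OracleFreeC c₂
  | .wh e c => OracleFreeE e ∧ OracleFreeC c

/-! ### Neutral and positive operators, safe environments -/

/-- Neutral operators: constants, predicates, or operators computing a subword
of one of their arguments. -/
def Sig.Neutral (S : Sig) (o : S.Op) : Prop :=
  S.ar o = 0 ∨ (∀ v, S.sem o v = [false] ∨ S.sem o v = [true]) ∨
    (∀ v, ∃ i, S.sem o v <:+: v i)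

/-- Positive operators: the size of the output is bounded by the maximal size of
the arguments plus a constant. -/
def Sig.Positive (S : Sig) (o : S.Op) : Prop :=
  ∃ c : ℕ, ∀ v, (S.sem o v).length ≤ (Finset.univ.sup fun i => (v i).length) + c

/-- The semantics of the operator is polynomial time computable. -/
def Sig.PolyTimeOp (S : Sig) (o : S.Op) : Prop :=
  (fun v => S.sem o v) ∈ FPm (S.ar o)

/-- Operator typing environments: to each operator and each innermost tier, a set
of admissible operator types `t₁ → ⋯ → t_{ar op} → t`. -/
abbrev OpEnv (S : Sig) := ∀ o : S.Op, ℕ → Set ((Fin (S.ar o) → ℕ) × ℕ)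

/-- Safe operator typing environments. -/
def SafeDelta (S : Sig) (Δ : OpEnv S) : Prop :=
  ∀ (o : S.Op) (tin : ℕ) (tv : Fin (S.ar o) → ℕ) (t : ℕ), (tv, t) ∈ Δ o tin →
    (0 < S.ar o → (S.Neutral o ∨ S.Positive o) ∧ S.PolyTimeOp o) ∧
    (∀ i, t ≤ tv i) ∧ (∀ i, tv i ≤ tin) ∧ t ≤ tin ∧
    (S.Positive o ∧ ¬ S.Neutral o → t < tin)

/-! ### The tier-based type system -/

/-- Typing judgments for expressions: `TE S Γ Δ e t ti to`. -/
inductive TE (S : Sig) (Γ : ℕ → ℕ) (Δ : OpEnv S) : Expr S → ℕ → ℕ → ℕ → Prop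
  | var {x tin tout} : TE S Γ Δ (.var x) (Γ x) tin tout
  | op {o : S.Op} {a tv t tin tout} : (tv, t) ∈ Δ o tin →
      (∀ i, TE S Γ Δ (a i) (tv i) tin tout) → TE S Γ Δ (.op o a) t tin tout
  | orac {e₁ e₂ t tin tout} : TE S Γ Δ e₁ t tin tout → TE S Γ Δ e₂ tout tin tout →
      t < tin → t ≤ tout → TE S Γ Δ (.orac e₁ e₂) t tin tout

/-- Typing judgments for commands: `TC S Γ Δ c t ti to`. -/
inductive TC (S : Sig) (Γ : ℕ → ℕ) (Δ : OpEnv S) : Cmd S → ℕ → ℕ → ℕ → Prop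
  | sub {c t tin tout} : TC S Γ Δ c t tin tout → TC S Γ Δ c (t + 1) tin tout
  | skip {tin tout} : TC S Γ Δ .skip 0 tin tout
  | assign {x e t' tin tout} : TE S Γ Δ e t' tin tout → Γ x ≤ t' →
      TC S Γ Δ (.assign x e) (Γ x) tin tout
  | seq {c₁ c₂ t tin tout} : TC S Γ Δ c₁ t tin tout → TC S Γ Δ c₂ t tin tout →
      TC S Γ Δ (.seq c₁ c₂) t tin tout
  | ite {e c₁ c₂ t tin tout} : TE S Γ Δ e t tin tout → TC S Γ Δ c₁ t tin tout →
      TC S Γ Δ c₂ t tin tout → TC S Γ Δ (.ite e c₁ c₂) t tin tout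
  | whW {e c t tin tout} : TE S Γ Δ e t tin tout → TC S Γ Δ c t t tout →
      1 ≤ t → t ≤ tout → TC S Γ Δ (.wh e c) t tin tout
  | wh0 {e c t tin} : TE S Γ Δ e t tin t → TC S Γ Δ c t t t →
      1 ≤ t → TC S Γ Δ (.wh e c) t tin 0

/-! ### Typing derivations as trees -/

mutual
/-- Typing derivation trees for expressions. -/
inductive DE (S : Sig) (Γ : ℕ → ℕ) (Δ : OpEnv S) : Expr S → ℕ → ℕ → ℕ → Type
  | var (x tin tout : ℕ) : DE S Γ Δ (.var x) (Γ x) tin tout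
  | op {o : S.Op} {a tv t tin tout} : (tv, t) ∈ Δ o tin →
      (∀ i, DE S Γ Δ (a i) (tv i) tin tout) → DE S Γ Δ (.op o a) t tin tout
  | orac {e₁ e₂ t tin tout} : DE S Γ Δ e₁ t tin tout → DE S Γ Δ e₂ tout tin tout →
      t < tin → t ≤ tout → DE S Γ Δ (.orac e₁ e₂) t tin tout

/-- Typing derivation trees for commands. -/
inductive DC (S : Sig) (Γ : ℕ → ℕ) (Δ : OpEnv S) : Cmd S → ℕ → ℕ → ℕ → Type
  | sub {c t tin tout} : DC S Γ Δ c t tin tout → DC S Γ Δ c (t + 1) tin tout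
  | skip (tin tout : ℕ) : DC S Γ Δ .skip 0 tin tout
  | assign {x e t' tin tout} : DE S Γ Δ e t' tin tout → Γ x ≤ t' →
      DC S Γ Δ (.assign x e) (Γ x) tin tout
  | seq {c₁ c₂ t tin tout} : DC S Γ Δ c₁ t tin tout → DC S Γ Δ c₂ t tin tout →
      DC S Γ Δ (.seq c₁ c₂) t tin tout
  | ite {e c₁ c₂ t tin tout} : DE S Γ Δ e t tin tout → DC S Γ Δ c₁ t tin tout →
      DC S Γ Δ c₂ t tin tout → DC S Γ Δ (.ite e c₁ c₂) t tin tout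
  | whW {e c t tin tout} : DE S Γ Δ e t tin tout → DC S Γ Δ c t t tout →
      1 ≤ t → t ≤ tout → DC S Γ Δ (.wh e c) t tin tout
  | wh0 {e c t tin} : DE S Γ Δ e t tin t → DC S Γ Δ c t t t →
      1 ≤ t → DC S Γ Δ (.wh e c) t tin 0
end

/-- `SubC ρ ρ'`: the command typing derivation `ρ` is a subderivation (subtree) of
`ρ'`, i.e. `ρ ∈ D(ρ')`. -/
inductive SubC {S : Sig} {Γ : ℕ → ℕ} {Δ : OpEnv S} :
    ∀ {c₁ t₁ i₁ o₁ c₂ t₂ i₂ o₂}, DC S Γ Δ c₁ t₁ i₁ o₁ → DC S Γ Δ c₂ t₂ i₂ o₂ → Prop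
  | refl {c t tin tout} (ρ : DC S Γ Δ c t tin tout) : SubC ρ ρ
  | sub {c₁ t₁ i₁ o₁ c t tin tout} {ρ : DC S Γ Δ c₁ t₁ i₁ o₁} {ρ' : DC S Γ Δ c t tin tout} :
      SubC ρ ρ' → SubC ρ (DC.sub ρ')
  | seqL {c₁ t₁ i₁ o₁ ca cb t tin tout} {ρ : DC S Γ Δ c₁ t₁ i₁ o₁}
      {ρa : DC S Γ Δ ca t tin tout} {ρb : DC S Γ Δ cb t tin tout} :
      SubC ρ ρa → SubC ρ (DC.seq ρa ρb)
  | seqR {c₁ t₁ i₁ o₁ ca cb t tin tout} {ρ : DC S Γ Δ c₁ t₁ i₁ o₁}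
      {ρa : DC S Γ Δ ca t tin tout} {ρb : DC S Γ Δ cb t tin tout} :
      SubC ρ ρb → SubC ρ (DC.seq ρa ρb)
  | iteL {c₁ t₁ i₁ o₁ e ca cb t tin tout} {ρ : DC S Γ Δ c₁ t₁ i₁ o₁}
      {ρe : DE S Γ Δ e t tin tout} {ρa : DC S Γ Δ ca t tin tout} {ρb : DC S Γ Δ cb t tin tout} :
      SubC ρ ρa → SubC ρ (DC.ite ρe ρa ρb)
  | iteR {c₁ t₁ i₁ o₁ e ca cb t tin tout} {ρ : DC S Γ Δ c₁ t₁ i₁ o₁}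
      {ρe : DE S Γ Δ e t tin tout} {ρa : DC S Γ Δ ca t tin tout} {ρb : DC S Γ Δ cb t tin tout} :
      SubC ρ ρa → SubC ρ (DC.ite ρe ρb ρa)
  | whW {c₁ t₁ i₁ o₁ e c t tin tout} {ρ : DC S Γ Δ c₁ t₁ i₁ o₁}
      {ρe : DE S Γ Δ e t tin tout} {ρc : DC S Γ Δ c t t tout} {h₁ : 1 ≤ t} {h₂ : t ≤ tout} :
      SubC ρ ρc → SubC ρ (DC.whW ρe ρc h₁ h₂)
  | wh0 {c₁ t₁ i₁ o₁ e c t tin} {ρ : DC S Γ Δ c₁ t₁ i₁ o₁}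
      {ρe : DE S Γ Δ e t tin t} {ρc : DC S Γ Δ c t t t} {h₁ : 1 ≤ t} :
      SubC ρ ρc → SubC ρ (DC.wh0 ρe ρc h₁)

/-- `SSubC ρ ρ'`: `ρ` is a *strict* subderivation of `ρ'`, i.e. `ρ ∈ D̊(ρ')`. -/
inductive SSubC {S : Sig} {Γ : ℕ → ℕ} {Δ : OpEnv S} :
    ∀ {c₁ t₁ i₁ o₁ c₂ t₂ i₂ o₂}, DC S Γ Δ c₁ t₁ i₁ o₁ → DC S Γ Δ c₂ t₂ i₂ o₂ → Prop
  | sub {c₁ t₁ i₁ o₁ c t tin tout} {ρ : DC S Γ Δ c₁ t₁ i₁ o₁} {ρ' : DC S Γ Δ c t tin tout} :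
      SubC ρ ρ' → SSubC ρ (DC.sub ρ')
  | seqL {c₁ t₁ i₁ o₁ ca cb t tin tout} {ρ : DC S Γ Δ c₁ t₁ i₁ o₁}
      {ρa : DC S Γ Δ ca t tin tout} {ρb : DC S Γ Δ cb t tin tout} :
      SubC ρ ρa → SSubC ρ (DC.seq ρa ρb)
  | seqR {c₁ t₁ i₁ o₁ ca cb t tin tout} {ρ : DC S Γ Δ c₁ t₁ i₁ o₁}
      {ρa : DC S Γ Δ ca t tin tout} {ρb : DC S Γ Δ cb t tin tout} :
      SubC ρ ρb → SSubC ρ (DC.seq ρa ρb)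
  | iteL {c₁ t₁ i₁ o₁ e ca cb t tin tout} {ρ : DC S Γ Δ c₁ t₁ i₁ o₁}
      {ρe : DE S Γ Δ e t tin tout} {ρa : DC S Γ Δ ca t tin tout} {ρb : DC S Γ Δ cb t tin tout} :
      SubC ρ ρa → SSubC ρ (DC.ite ρe ρa ρb)
  | iteR {c₁ t₁ i₁ o₁ e ca cb t tin tout} {ρ : DC S Γ Δ c₁ t₁ i₁ o₁}
      {ρe : DE S Γ Δ e t tin tout} {ρa : DC S Γ Δ ca t tin tout} {ρb : DC S Γ Δ cb t tin tout} :
      SubC ρ ρa → SSubC ρ (DC.ite ρe ρb ρa)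
  | whW {c₁ t₁ i₁ o₁ e c t tin tout} {ρ : DC S Γ Δ c₁ t₁ i₁ o₁}
      {ρe : DE S Γ Δ e t tin tout} {ρc : DC S Γ Δ c t t tout} {h₁ : 1 ≤ t} {h₂ : t ≤ tout} :
      SubC ρ ρc → SSubC ρ (DC.whW ρe ρc h₁ h₂)
  | wh0 {c₁ t₁ i₁ o₁ e c t tin} {ρ : DC S Γ Δ c₁ t₁ i₁ o₁}
      {ρe : DE S Γ Δ e t tin t} {ρc : DC S Γ Δ c t t t} {h₁ : 1 ≤ t} :
      SubC ρ ρc → SSubC ρ (DC.wh0 ρe ρc h₁)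

/-- The last rule of a command typing derivation is (W) or (W₀). -/
def DC.lastWhileIntro {S : Sig} {Γ : ℕ → ℕ} {Δ : OpEnv S} :
    ∀ {c t tin tout}, DC S Γ Δ c t tin tout → Prop
  | _, _, _, _, .whW _ _ _ _ => True
  | _, _, _, _, .wh0 _ _ _ => True
  | _, _, _, _, _ => False

/-! ### Safe programs, ST and the computed functionals -/

/-- A program is safe with respect to `Γ` and a safe `Δ` when its command is typable. -/
def SafeProg (S : Sig) (Γ : ℕ → ℕ) (Δ : OpEnv S) (p : Prog S) : Prop :=
  SafeDelta S Δ ∧ ∃ t tin tout, TC S Γ Δ p.cmd t tin tout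

def Prog.vars (p : Prog S) : Finset ℕ := varsC p.cmd ∪ {p.ret}

def Prog.varList (p : Prog S) : List ℕ := p.vars.sort (· ≤ ·)

/-- The number of input arguments of a program: one for each of its variables. -/
def Prog.arity (p : Prog S) : ℕ := p.varList.length

/-- The initial store associated with input values `v` (all other variables are ε). -/
def Prog.initStore (p : Prog S) (v : Fin p.arity → W) : ℕ → W := fun x =>
  if h : x ∈ p.varList then v ⟨p.varList.idxOf x, List.idxOf_lt_length_iff.mpr h⟩ else []

/-- `p.EvalP φ v w` : on oracle `φ` and inputs `v`, the program `p` terminates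
with result `w`. -/
def Prog.EvalP (p : Prog S) (φ : W → W) (v : Fin p.arity → W) (w : W) : Prop :=
  ∃ μ' n q, EvalC S φ p.cmd (p.initStore v) μ' n q ∧ w = μ' p.ret

/-- Termination on all oracles and inputs. -/
def Prog.Terminating (p : Prog S) : Prop := ∀ φ v, ∃ w, p.EvalP φ v w

open Classical in
/-- The (second-order) function computed by the program. -/
noncomputable def Prog.fn (p : Prog S) (φ : W → W) (v : Fin p.arity → W) : W :=
  if h : ∃ w, p.EvalP φ v w then h.choose else []

/-- `ST`: the safe and terminating programs. -/
def STset (S : Sig) : Set (Prog S) :=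
  { p | (∃ Γ Δ, SafeProg S Γ Δ p) ∧ p.Terminating }

/-- The `n`-ary type-2 functionals computed by programs in `ST`. -/
def STsemN (S : Sig) (n : ℕ) : Set ((W → W) → (Fin n → W) → W) :=
  { F | ∃ p ∈ STset S, ∃ h : p.arity = n,
      ∀ φ v, F φ v = p.fn φ (fun i => v (Fin.cast h i)) }

/-- `⟦ST⟧` as a family indexed by numbers of oracles and word arguments. -/
def STfam (S : Sig) : ∀ k m : ℕ, Set ((Fin k → W → W) → (Fin m → W) → W) :=
  fun k m F => k = 1 ∧ (fun φ v => F (fun _ => φ) v) ∈ STsemN S m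

/-- The type-1 functions computed by oracle-free programs of `ST`. -/
def STsem1 (S : Sig) (m : ℕ) : Set ((Fin m → W) → W) :=
  { F | ∃ p ∈ STset S, OracleFreeC p.cmd ∧ ∃ h : p.arity = m,
      ∀ v, F v = p.fn (fun _ => []) (fun i => v (Fin.cast h i)) }

/-- Programs in `ST` typable using only tiers `⪯ t` for the program variables. -/
def STtSet (S : Sig) (t : ℕ) : Set (Prog S) :=
  { p | (∃ Γ Δ, SafeDelta S Δ ∧ (∀ x ∈ p.vars, Γ x ≤ t) ∧
       ∃ t' tin tout, TC S Γ Δ p.cmd t' tin tout) ∧ p.Terminating }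

def STtFam (S : Sig) (t : ℕ) : ∀ k m : ℕ, Set ((Fin k → W → W) → (Fin m → W) → W) :=
  fun k m F => k = 1 ∧
    ∃ p ∈ STtSet S t, ∃ h : p.arity = m,
      ∀ φ v, F (fun _ => φ) v = p.fn φ (fun i => v (Fin.cast h i))

/-! ### Runtime measures -/

/-- Size of a store, restricted to the variables of the program. -/
def storeSize (p : Prog S) (μ : ℕ → W) : ℕ := ∑ x ∈ p.vars, (μ x).length

/-- `mval p φ μ q`: the maximum of the size of the store and of the sizes of all
oracle answers in the derivation (whose oracle inputs are `q`). -/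
def mval (p : Prog S) (φ : W → W) (μ : ℕ → W) (q : List W) : ℕ :=
  max (storeSize p μ) (maxList (q.map fun v => (φ v).length))

/-- Polynomial step count for programs. -/
def Prog.PolyStepCount (p : Prog S) : Prop :=
  ∃ P : Polynomial ℕ, ∀ (φ : W → W) (μ μ' : ℕ → W) (n : ℕ) (q : List W),
    EvalC S φ p.cmd μ μ' n q → n ≤ P.eval (mval p φ μ q)

/-- Finite lookahead revision for programs. -/
def Prog.FiniteLookahead (p : Prog S) : Prop :=
  ∃ r : ℕ, ∀ (φ : W → W) (μ μ' : ℕ → W) (n : ℕ) (q : List W),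
    EvalC S φ p.cmd μ μ' n q → lrCount q ≤ r

/-- Store equivalence at tier `t`: stores agree on all variables of tier `⪰ t`. -/
def storeEquiv (Γ : ℕ → ℕ) (t : ℕ) (μ₁ μ₂ : ℕ → W) : Prop :=
  ∀ x, t ≤ Γ x → μ₁ x = μ₂ x

/-! ### The full signature (all neutral/positive operators available) -/

/-- The signature containing every total word function as an operator. -/
def SigAll : Sig := ⟨(m : ℕ) × ((Fin m → W) → W), Sigma.fst, fun o => o.snd⟩

/-! ### Padded oracles -/

/-- Strip the `10^n` padding from a word: `stripPad (w ++ 1 ++ 0^n) = w`. -/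
def stripPad (v : W) : W := ((v.reverse.dropWhile fun b => !b).tail).reverse

/-- The padded version `φ̃` of an oracle `φ` : it satisfies `φ̃ (w10ⁿ) = φ w`. -/
def tildeOracle (φ : W → W) : W → W := fun v => φ (stripPad v)

/-- Output tiers only change at rule (W₀), where the premises' output tier rises from `0`. -/
theorem SubC.tout_le {Γ : ℕ → ℕ} {Δ : OpEnv S}
    {c₁ t₁ i₁ o₁ c₂ t₂ i₂ o₂} {ρ : DC S Γ Δ c₁ t₁ i₁ o₁} {ρ' : DC S Γ Δ c₂ t₂ i₂ o₂}
    (h : SubC ρ ρ') : o₂ ≤ o₁ := by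
  induction h with
  | refl => exact le_rfl
  | sub _ ih | seqL _ ih | seqR _ ih | iteL _ ih | iteR _ ih | whW _ ih => exact ih
  | wh0 => exact Nat.zero_le _

/-- **Outermost-tier bound lemma.** Let `ρ` be a typing derivation of a safe
program. For any subderivation `ρ₁ ⊢ while(e₁){c₁} : (ta,ia,oa)` of `ρ` whose
last rule is (W) or (W₀), and any command typing subderivation
`ρ₂ ⊢ c₂ : (tb,ib,ob)` in `D̊(ρ₁)`, it holds that `ta ⪯ ob`. -/
theorem outermost_tier_bound (S : Sig) (Γ : ℕ → ℕ) (Δ : OpEnv S)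
    (hΔ : SafeDelta S Δ) (p : Prog S) {t tin tout : ℕ}
    (ρ : DC S Γ Δ p.cmd t tin tout)
    {e₁ : Expr S} {c₁ : Cmd S} {ta ia oa : ℕ}
    (ρ₁ : DC S Γ Δ (.wh e₁ c₁) ta ia oa)
    {c₂ : Cmd S} {tb ib ob : ℕ} (ρ₂ : DC S Γ Δ c₂ tb ib ob)
    (h₁ : SubC ρ₁ ρ) (hW : ρ₁.lastWhileIntro) (h₂ : SSubC ρ₂ ρ₁) :
    ta ≤ ob := by
  cases h₂ with
  | sub => exact hW.elim
  | whW hbody => exact ‹ta ≤ oa›.trans hbody.tout_le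
  | wh0 hbody => exact hbody.tout_le

end BFFpaper
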